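/- Suppose a solution node n* lies at depth d in the search tree and each conditional step probability along its path is at least q ∈ (0,1]. Then under best-first search with φ(n) = g(n)/π(n) and unit losses, the number of node expansions before expanding n* is at most d/q^d · B, where B bounds ∑_{n ∈ L} π(n)/1 ≤ 1 over the frontier antichain L, i.e., the search loss is at most d/q^d. -/

import Mathlib

theorem stmt19 {N : Type*} [DecidableEq N]
    (C : N → Finset N) (root : N) (cond : N → N → ℝ) (g π φ : N → ℝ)
    (q : ℝ) (hq0 : 0 < q) (hq1 : q ≤ 1)
    (hg0 : g root = 0) (hgc : ∀ n, ∀ n' ∈ C n, g n' = g n + 1)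
    (hπroot : π root = 1)
    (hπrec : ∀ n, ∀ n' ∈ C n, π n' = cond n n' * π n)
    (hcond : ∀ n, ∀ n' ∈ C n, 0 ≤ cond n n' ∧ cond n n' ≤ 1)
    (hπpos : ∀ n, 0 < π n)
    (hφ : ∀ n, φ n = g n / π n)
    (e : ℕ → N) (F : ℕ → Finset N)
    (hF0 : F 0 = {root})
    (hFs : ∀ k, F (k + 1) = (F k).erase (e k) ∪ C (e k))
    (he : ∀ k, e k ∈ F k ∧ ∀ m ∈ F k, φ (e k) ≤ φ m)
    (hsum : ∀ k, ∑ n ∈ F k, π n ≤ 1)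
    (d : ℕ) (hd : 1 ≤ d) (p : ℕ → N)
    (hp0 : p 0 = root)
    (hpc : ∀ j < d, p (j + 1) ∈ C (p j) ∧ q ≤ cond (p j) (p (j + 1)))
    (nstar : N) (hnstar : p d = nstar)
    (K : ℕ) (hK : e K = nstar) :
    (K : ℝ) ≤ (d : ℝ) / q ^ d := by
  classical
  -- g is nonnegative on frontier nodes
  have hg_nonneg : ∀ k, ∀ n ∈ F k, 0 ≤ g n := by
    intro k
    induction k with
    | zero =>
      intro n hn
      rw [hF0, Finset.mem_singleton] at hn
      rw [hn, hg0]
    | succ k ih =>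
      intro n hn
      rw [hFs k] at hn
      rcases Finset.mem_union.1 hn with h | h
      · exact ih n (Finset.mem_of_mem_erase h)
      · rw [hgc (e k) n h]
        have := ih (e k) (he k).1
        linarith
  -- children have smaller π
  have hπc : ∀ m n', n' ∈ C m → π n' ≤ π m := by
    intro m n' h
    rw [hπrec m n' h]
    obtain ⟨hc0, hc1⟩ := hcond m n' h
    nlinarith [hπpos m]
  -- expansion φ values nondecreasing
  have lam_mono : Monotone (fun k => φ (e k)) := by
    apply monotone_nat_of_le_succ
    intro k
    have he1 := (he (k + 1)).1
    rw [hFs k] at he1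
    rcases Finset.mem_union.1 he1 with h | h
    · exact (he k).2 _ (Finset.mem_of_mem_erase h)
    · have h1 : π (e (k + 1)) ≤ π (e k) := hπc _ _ h
      have h2 : 0 < π (e (k + 1)) := hπpos _
      have h3 : 0 < π (e k) := hπpos _
      have h4 : 0 ≤ g (e k) := hg_nonneg k _ (he k).1
      simp only [hφ, hgc (e k) _ h]
      rw [div_le_div_iff₀ h3 h2]
      nlinarith [mul_nonneg h4 (sub_nonneg.2 h1)]
  -- birth time: each expanded node (k ≥ 1) is a child of e (b k - 1) and
  -- lives in the frontier during [b k, k]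
  have exB : ∀ k, ∃ bk : ℕ, 1 ≤ k →
      (1 ≤ bk ∧ bk ≤ k ∧ (∀ j, bk ≤ j → j ≤ k → e k ∈ F j) ∧
        e k ∈ C (e (bk - 1))) := by
    intro k
    by_cases hk : 1 ≤ k
    · have hex : ∃ i, 1 ≤ i ∧ ∀ j, i ≤ j → j ≤ k → e k ∈ F j := by
        refine ⟨k, hk, fun j h1 h2 => ?_⟩
        have : j = k := le_antisymm h2 h1
        rw [this]; exact (he k).1
      refine ⟨Nat.find hex, fun _ => ?_⟩
      obtain ⟨h1, h2⟩ := Nat.find_spec hex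
      have hle : Nat.find hex ≤ k := by
        apply Nat.find_min' hex
        refine ⟨hk, fun j hj1 hj2 => ?_⟩
        have : j = k := le_antisymm hj2 hj1
        rw [this]; exact (he k).1
      refine ⟨h1, hle, h2, ?_⟩
      set b := Nat.find hex with hbdef
      have hmemb : e k ∈ F b := h2 b le_rfl hle
      have hb1 : b - 1 + 1 = b := Nat.succ_pred_eq_of_pos h1
      have hFb : F b = (F (b - 1)).erase (e (b - 1)) ∪ C (e (b - 1)) := by
        have := hFs (b - 1); rwa [hb1] at this
      rw [hFb] at hmemb
      rcases Finset.mem_union.1 hmemb with h | h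
      · exfalso
        have hmem' : e k ∈ F (b - 1) := Finset.mem_of_mem_erase h
        rcases Nat.lt_or_ge 1 b with hb2 | hb2
        · have hQ' : 1 ≤ b - 1 ∧ ∀ j, b - 1 ≤ j → j ≤ k → e k ∈ F j := by
            refine ⟨by omega, fun j hj1 hj2 => ?_⟩
            rcases eq_or_lt_of_le hj1 with hj | hj
            · rw [← hj]; exact hmem'
            · exact h2 j (by omega) hj2
          exact Nat.find_min hex (by omega) hQ'
        · have hbeq : b = 1 := le_antisymm hb2 h1
          rw [hbeq] at h
          simp only [Nat.sub_self] at h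
          have he0 : e 0 = root := by
            have := (he 0).1
            rwa [hF0, Finset.mem_singleton] at this
          rw [hF0, he0, Finset.erase_singleton] at h
          exact Finset.notMem_empty _ h
      · exact h
    · exact ⟨1, fun h => absurd h hk⟩
  choose b hb using exB
  -- telescoping lemma
  have tele : ∀ bb kk, 1 ≤ bb → bb ≤ kk →
      ∑ i ∈ Finset.Icc bb kk, (φ (e i) - φ (e (i - 1))) = φ (e kk) - φ (e (bb - 1)) := by
    intro bb kk hbb hle
    induction kk, hle using Nat.le_induction with
    | base => rw [Finset.Icc_self, Finset.sum_singleton]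
    | succ n hn ih =>
      rw [Finset.sum_Icc_succ_top (by omega : bb ≤ n + 1), ih]
      simp only [Nat.add_sub_cancel]
      ring
  -- per-expansion inequality
  have perk : ∀ k ∈ Finset.Icc 1 K,
      (1 : ℝ) ≤ π (e k) * (φ (e k) - φ (e (b k - 1))) := by
    intro k hk
    rw [Finset.mem_Icc] at hk
    obtain ⟨hb1, hbk, hmemF, hpar⟩ := hb k hk.1
    have hg1 : g (e k) = g (e (b k - 1)) + 1 := hgc _ _ hpar
    have hp1 : 0 < π (e (b k - 1)) := hπpos _
    have hp2 : 0 < π (e k) := hπpos _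
    have hple : π (e k) ≤ π (e (b k - 1)) := hπc _ _ hpar
    have hga : 0 ≤ g (e (b k - 1)) := hg_nonneg (b k - 1) _ (he (b k - 1)).1
    simp only [hφ, hg1]
    have key : π (e k) * ((g (e (b k - 1)) + 1) / π (e k) - g (e (b k - 1)) / π (e (b k - 1)))
        = (g (e (b k - 1)) + 1) - g (e (b k - 1)) * (π (e k) / π (e (b k - 1))) := by
      field_simp
    rw [key]
    have hd1 : π (e k) / π (e (b k - 1)) ≤ 1 := (div_le_one hp1).2 hple
    have hd0 : 0 ≤ π (e k) / π (e (b k - 1)) := by positivity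
    nlinarith
  -- antichain bound at each time i
  have hA : ∀ i ∈ Finset.Icc 1 K,
      ∑ k ∈ (Finset.Icc 1 K).filter (fun k => i ∈ Finset.Icc (b k) k), π (e k) ≤ 1 := by
    intro i hi
    set s := (Finset.Icc 1 K).filter (fun k => i ∈ Finset.Icc (b k) k) with hs
    have key : ∀ x ∈ s, ∀ y ∈ s, x < y → e x ≠ e y := by
      intro x hx y hy hlt heq
      rw [hs, Finset.mem_filter, Finset.mem_Icc, Finset.mem_Icc] at hx hy
      have hyF : e y ∈ F (x + 1) :=
        (hb y hy.1.1).2.2.1 (x + 1) (by omega) (by omega)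
      rw [← heq, hFs x] at hyF
      rcases Finset.mem_union.1 hyF with h | h
      · exact Finset.notMem_erase _ _ h
      · have := hgc (e x) (e x) h
        linarith
    have hinj : ∀ x ∈ s, ∀ y ∈ s, e x = e y → x = y := by
      intro x hx y hy hxy
      rcases lt_trichotomy x y with h | h | h
      · exact absurd hxy (key x hx y hy h)
      · exact h
      · exact absurd hxy.symm (key y hy x hx h)
    have himg : ∑ n ∈ s.image e, π n = ∑ k ∈ s, π (e k) := Finset.sum_image hinj
    rw [← himg]
    have hsub : s.image e ⊆ F i := by
      intro n hn
      rw [Finset.mem_image] at hn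
      obtain ⟨k, hk, rfl⟩ := hn
      rw [hs, Finset.mem_filter, Finset.mem_Icc, Finset.mem_Icc] at hk
      exact (hb k hk.1.1).2.2.1 i hk.2.1 hk.2.2
    calc ∑ n ∈ s.image e, π n ≤ ∑ n ∈ F i, π n :=
          Finset.sum_le_sum_of_subset_of_nonneg hsub (fun n _ _ => (hπpos n).le)
      _ ≤ 1 := hsum i
  -- main chain (for K ≥ 1); then path facts
  have he0 : e 0 = root := by
    have := (he 0).1
    rwa [hF0, Finset.mem_singleton] at this
  have hφ0 : φ (e 0) = 0 := by
    rw [he0, hφ, hg0, hπroot]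
    simp
  have gpath : ∀ j, j ≤ d → g (p j) = (j : ℝ) := by
    intro j
    induction j with
    | zero => intro _; rw [hp0, hg0]; simp
    | succ n ih =>
      intro h
      rw [hgc (p n) (p (n + 1)) (hpc n (by omega)).1, ih (by omega)]
      push_cast
      ring
  have qpath : ∀ j, j ≤ d → q ^ j ≤ π (p j) := by
    intro j
    induction j with
    | zero => intro _; rw [hp0, hπroot, pow_zero]
    | succ n ih =>
      intro h
      have hpcn := hpc n (by omega)
      rw [hπrec (p n) _ hpcn.1, pow_succ]
      have h3 := ih (by omega)
      have h4 : 0 < q ^ n := pow_pos hq0 n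
      have h5 := hπpos (p n)
      nlinarith [mul_le_mul h3 hpcn.2 hq0.le h5.le]
  have hstar : φ nstar ≤ (d : ℝ) / q ^ d := by
    rw [hφ, ← hnstar, gpath d le_rfl]
    rw [div_le_div_iff₀ (hπpos _) (pow_pos hq0 d)]
    have h6 := qpath d le_rfl
    have hd0 : (0 : ℝ) ≤ d := Nat.cast_nonneg d
    nlinarith
  rcases Nat.eq_zero_or_pos K with hK0 | hK1
  · rw [hK0]
    simp only [Nat.cast_zero]
    positivity
  · have main : (K : ℝ) ≤ φ (e K) - φ (e 0) := by
      calc (K : ℝ) = ∑ _k ∈ Finset.Icc 1 K, (1 : ℝ) := by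
            rw [Finset.sum_const, Nat.card_Icc]
            simp
        _ ≤ ∑ k ∈ Finset.Icc 1 K, π (e k) * (φ (e k) - φ (e (b k - 1))) :=
            Finset.sum_le_sum perk
        _ = ∑ k ∈ Finset.Icc 1 K, ∑ i ∈ Finset.Icc (b k) k,
              π (e k) * (φ (e i) - φ (e (i - 1))) := by
            refine Finset.sum_congr rfl fun k hk => ?_
            rw [Finset.mem_Icc] at hk
            obtain ⟨hb1, hbk, _, _⟩ := hb k hk.1
            rw [← Finset.mul_sum, tele (b k) k hb1 hbk]
        _ = ∑ k ∈ Finset.Icc 1 K, ∑ i ∈ Finset.Icc 1 K,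
              (if i ∈ Finset.Icc (b k) k then π (e k) * (φ (e i) - φ (e (i - 1))) else 0) := by
            refine Finset.sum_congr rfl fun k hk => ?_
            rw [Finset.mem_Icc] at hk
            obtain ⟨hb1, hbk, _, _⟩ := hb k hk.1
            rw [Finset.sum_ite_mem,
              Finset.inter_eq_right.mpr (Finset.Icc_subset_Icc hb1 hk.2)]
        _ = ∑ i ∈ Finset.Icc 1 K, ∑ k ∈ Finset.Icc 1 K,
              (if i ∈ Finset.Icc (b k) k then π (e k) * (φ (e i) - φ (e (i - 1))) else 0) :=
            Finset.sum_comm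
        _ ≤ ∑ i ∈ Finset.Icc 1 K, (φ (e i) - φ (e (i - 1))) := by
            refine Finset.sum_le_sum fun i hi => ?_
            have hΔ : 0 ≤ φ (e i) - φ (e (i - 1)) :=
              sub_nonneg.2 (lam_mono (Nat.sub_le i 1))
            rw [← Finset.sum_filter, ← Finset.sum_mul]
            calc (∑ k ∈ (Finset.Icc 1 K).filter (fun k => i ∈ Finset.Icc (b k) k), π (e k))
                  * (φ (e i) - φ (e (i - 1)))
                ≤ 1 * (φ (e i) - φ (e (i - 1))) :=
                  mul_le_mul_of_nonneg_right (hA i hi) hΔ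
              _ = φ (e i) - φ (e (i - 1)) := one_mul _
        _ = φ (e K) - φ (e 0) := by

            have := tele 1 K le_rfl hK1
            simpa using this
    rw [hK] at main
    linarith
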